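/- For all 3×3 real matrices S, S̃ and all h, h̃ ∈ ℝ³, setting Γ_{ijk} := S_{ij} h_k − S̃_{ij} h̃_k: |Θ³ ⋮ Γ|² = 16 ‖S_skw h − S̃_skw h̃‖², where (Θ³ ⋮ Γ)_{ijk} := Σ_{l,m,n} Θ³_{ijklmn} Γ_{lmn}. -/

import Mathlib

open Matrix

/-- Kronecker delta on `Fin 3`. -/
def kron (i j : Fin 3) : ℝ := if i = j then 1 else 0

/-- The sixth-order tensor
`Θ³_{ijklmn} = δ_{il} δ_{mn} δ_{jk} − δ_{mi} δ_{ln} δ_{jk} − δ_{lj} δ_{mn} δ_{ik} + δ_{jm} δ_{ln} δ_{ik}`. -/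
def Theta3 (i j k l m n : Fin 3) : ℝ :=
  kron i l * kron m n * kron j k - kron m i * kron l n * kron j k
    - kron l j * kron m n * kron i k + kron j m * kron l n * kron i k

/-- Interpret a vector in `ℝ³` as an element of Euclidean space (with the Euclidean norm). -/
noncomputable def e3 (v : Fin 3 → ℝ) : EuclideanSpace ℝ (Fin 3) :=
  (WithLp.equiv 2 (Fin 3 → ℝ)).symm v

/-!
Contracting `Θ³` against `Γ` only sees the vector `v_i = Σ_m Γ_{imm} − Σ_m Γ_{mim}`:
`(Θ³ ⋮ Γ)_{ijk} = δ_{jk} v_i − δ_{ik} v_j`, whose squared norm is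
`(3 + 3 − 2) |v|² = 4 |v|²`. For `Γ = S ⊗ h − S̃ ⊗ h̃` one has
`v = (S − Sᵀ) h − (S̃ − S̃ᵀ) h̃ = 2 (S_skw h − S̃_skw h̃)`.
-/

def skewTrace {ι R : Type*} [Fintype ι] [Ring R] (Γ : ι → ι → ι → R) (i : ι) : R :=
  ∑ m, Γ i m m - ∑ m, Γ m i m

theorem skewTrace_sub_mul_apply {ι R : Type*} [Fintype ι] [CommRing R]
    (S S' : Matrix ι ι R) (h h' : ι → R) :
    skewTrace (fun i j k => S i j * h k - S' i j * h' k)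
      = (S - Sᵀ) *ᵥ h - (S' - S'ᵀ) *ᵥ h' := by
  ext i
  simp only [skewTrace, sub_mulVec, Pi.sub_apply, mulVec, dotProduct, transpose_apply,
    Finset.sum_sub_distrib]
  ring

theorem sum_Theta3_mul (Γ : Fin 3 → Fin 3 → Fin 3 → ℝ) (i j k : Fin 3) :
    ∑ l, ∑ m, ∑ n, Theta3 i j k l m n * Γ l m n
      = kron j k * skewTrace Γ i - kron i k * skewTrace Γ j := by
  simp only [Theta3, add_mul, sub_mul, Finset.sum_add_distrib, Finset.sum_sub_distrib]
  simp only [kron, mul_ite, mul_one, mul_zero, ite_mul, one_mul, zero_mul, Finset.sum_ite_irrel,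
    Finset.sum_ite_eq, Finset.mem_univ, ↓reduceIte, Finset.sum_const_zero, Finset.sum_ite_eq',
    skewTrace, mul_sub, Finset.mul_sum]
  ring

theorem sum_sq_kron_mul_sub (v : Fin 3 → ℝ) :
    ∑ i, ∑ j, ∑ k, (kron j k * v i - kron i k * v j) ^ 2 = 4 * ∑ i, v i ^ 2 := by
  simp [Fin.sum_univ_three, kron]
  ring

theorem norm_e3_sq (v : Fin 3 → ℝ) : ‖e3 v‖ ^ 2 = ∑ i, v i ^ 2 := by
  simp [e3, EuclideanSpace.norm_sq_eq]

theorem Theta3_contraction_norm (S S' : Matrix (Fin 3) (Fin 3) ℝ) (h h' : Fin 3 → ℝ)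
    (Sskw S'skw : Matrix (Fin 3) (Fin 3) ℝ)
    (hskw : Sskw = (2 : ℝ)⁻¹ • (S - Sᵀ)) (hskw' : S'skw = (2 : ℝ)⁻¹ • (S' - S'ᵀ))
    (Γ : Fin 3 → Fin 3 → Fin 3 → ℝ)
    (hΓ : ∀ i j k, Γ i j k = S i j * h k - S' i j * h' k) :
    (∑ i, ∑ j, ∑ k, (∑ l, ∑ m, ∑ n, Theta3 i j k l m n * Γ l m n) ^ 2)
      = 16 * ‖e3 (Sskw *ᵥ h - S'skw *ᵥ h')‖ ^ 2 := by
  have hv : Sskw *ᵥ h - S'skw *ᵥ h' = (2 : ℝ)⁻¹ • skewTrace Γ := by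
    rw [show Γ = _ from funext₃ hΓ, skewTrace_sub_mul_apply, hskw, hskw', smul_mulVec,
      smul_mulVec, smul_sub]
  simp only [sum_Theta3_mul, sum_sq_kron_mul_sub, hv, norm_e3_sq, Pi.smul_apply, smul_eq_mul,
    mul_pow, ← Finset.mul_sum]
  ring
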